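/- TERM weights collapse to uniform as losses concentrate: for any ε > 0 and t ≠ 0, if |f_i − f_j| ≤ δ for all i, j with δ := log(1 + ε)/|t|, then every TERM weight satisfies |N · w_i − 1| ≤ ε, where w_i := exp(t(f_i − R))/N and R := (1/t) log((1/N) Σ_j exp(t f_j)). -/

import Mathlib

theorem term_weights_collapse (N : ℕ) (hN : 0 < N) (t : ℝ) (ht : t ≠ 0)
    (ε : ℝ) (hε : 0 < ε) (f : Fin N → ℝ)
    (R : ℝ) (hR : R = (1 / t) * Real.log ((1 / N) * ∑ j : Fin N, Real.exp (t * f j)))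
    (w : Fin N → ℝ) (hw : ∀ i, w i = Real.exp (t * (f i - R)) / N)
    (hconc : ∀ i j, |f i - f j| ≤ Real.log (1 + ε) / |t|) :
    ∀ i, |N * w i - 1| ≤ ε := by
  intro i
  have hNpos : (0:ℝ) < N := by exact_mod_cast hN
  set S : ℝ := ∑ j : Fin N, Real.exp (t * f j) with hS
  have hSpos : 0 < S := Finset.sum_pos (fun j _ => Real.exp_pos _) ⟨i, Finset.mem_univ i⟩
  have hmeanpos : 0 < (1 / (N:ℝ)) * S := by positivity
  have htR : Real.exp (t * R) = (1 / (N:ℝ)) * S := by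
    rw [hR]
    have : t * (1 / t * Real.log (1 / ↑N * S)) = Real.log (1 / ↑N * S) := by
      field_simp
    rw [this, Real.exp_log hmeanpos]
  have hNw : (N:ℝ) * w i = Real.exp (t * f i) / ((1 / (N:ℝ)) * S) := by
    rw [hw i]
    rw [show t * (f i - R) = t * f i - t * R by ring, Real.exp_sub, htR]
    field_simp
  have hεt : 0 < |t| := abs_pos.mpr ht
  have hlog : ∀ j : Fin N, |t * f i - t * f j| ≤ Real.log (1 + ε) := by
    intro j
    have := hconc i j
    calc |t * f i - t * f j| = |t| * |f i - f j| := by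
          rw [← abs_mul]; ring_nf
      _ ≤ |t| * (Real.log (1 + ε) / |t|) := by
          exact mul_le_mul_of_nonneg_left this (abs_nonneg _)
      _ = Real.log (1 + ε) := by field_simp
  have h1ε : (0:ℝ) < 1 + ε := by linarith
  have hup : ∀ j : Fin N, Real.exp (t * f i) ≤ (1 + ε) * Real.exp (t * f j) := by
    intro j
    have h := (abs_le.mp (hlog j)).2
    have : Real.exp (t * f i - t * f j) ≤ 1 + ε := by
      calc Real.exp (t * f i - t * f j) ≤ Real.exp (Real.log (1 + ε)) := Real.exp_le_exp.mpr h
        _ = 1 + ε := Real.exp_log h1ε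
    calc Real.exp (t * f i) = Real.exp (t * f i - t * f j) * Real.exp (t * f j) := by
          rw [← Real.exp_add]; ring_nf
      _ ≤ (1 + ε) * Real.exp (t * f j) :=
          mul_le_mul_of_nonneg_right this (Real.exp_pos _).le
  have hdown : ∀ j : Fin N, Real.exp (t * f j) ≤ (1 + ε) * Real.exp (t * f i) := by
    intro j
    have h := (abs_le.mp (hlog j)).1
    have : Real.exp (t * f j - t * f i) ≤ 1 + ε := by
      calc Real.exp (t * f j - t * f i) ≤ Real.exp (Real.log (1 + ε)) := by
            apply Real.exp_le_exp.mpr; linarith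
        _ = 1 + ε := Real.exp_log h1ε
    calc Real.exp (t * f j) = Real.exp (t * f j - t * f i) * Real.exp (t * f i) := by
          rw [← Real.exp_add]; ring_nf
      _ ≤ (1 + ε) * Real.exp (t * f i) :=
          mul_le_mul_of_nonneg_right this (Real.exp_pos _).le
  have hsum_up : (N:ℝ) * Real.exp (t * f i) ≤ (1 + ε) * S := by
    calc (N:ℝ) * Real.exp (t * f i) = ∑ _j : Fin N, Real.exp (t * f i) := by
          simp [Finset.sum_const, mul_comm]
      _ ≤ ∑ j : Fin N, (1 + ε) * Real.exp (t * f j) :=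
          Finset.sum_le_sum fun j _ => hup j
      _ = (1 + ε) * S := by rw [Finset.mul_sum]
  have hsum_down : S ≤ (1 + ε) * ((N:ℝ) * Real.exp (t * f i)) := by
    calc S ≤ ∑ _j : Fin N, (1 + ε) * Real.exp (t * f i) :=
          Finset.sum_le_sum fun j _ => hdown j
      _ = (1 + ε) * ((N:ℝ) * Real.exp (t * f i)) := by
          simp [Finset.sum_const]; ring
  have hexpos : 0 < Real.exp (t * f i) := Real.exp_pos _
  rw [hNw]
  rw [abs_le]
  constructor
  · -- lower bound: exp/mean ≥ 1 - ε, from mean ≤ (1+ε) exp and 1/(1+ε) ≥ 1-ε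
    have h1 : (1 / (N:ℝ)) * S ≤ (1 + ε) * Real.exp (t * f i) := by
      rw [div_mul_eq_mul_div, div_le_iff₀ hNpos]
      calc (1:ℝ) * S = S := one_mul S
        _ ≤ (1 + ε) * ((N:ℝ) * Real.exp (t * f i)) := hsum_down
        _ = (1 + ε) * Real.exp (t * f i) * N := by ring
    have h2 : (1 - ε) * ((1 / (N:ℝ)) * S) ≤ Real.exp (t * f i) := by
      nlinarith [mul_pos hε hmeanpos, mul_pos hε hexpos]
    have h3 : 1 - ε ≤ Real.exp (t * f i) / ((1 / (N:ℝ)) * S) :=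
      (le_div_iff₀ hmeanpos).mpr h2
    linarith
  · rw [sub_le_iff_le_add, div_le_iff₀ hmeanpos]
    have : Real.exp (t * f i) ≤ (1 + ε) * ((1 / (N:ℝ)) * S) := by
      rw [show (1 + ε) * ((1 / (N:ℝ)) * S) = ((1 + ε) * S) / N by ring, le_div_iff₀ hNpos]
      linarith [hsum_up]
    linarith
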